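/- Let u ∈ ℝ^n, P = u u^⊤, and let Q ∈ ℝ^{n×n} be a nonzero symmetric positive semidefinite matrix. Then the smallest positive eigenvalue of P + Q satisfies λ_min(P+Q) ≥ (1 − cos θ(u, ran Q)) · min{‖u‖², λ_min(Q)}, where λ_min denotes the smallest positive eigenvalue and cos θ(u, ran Q) = ‖P_{ran Q} u‖/‖u‖. -/

import Mathlib

/-!
Put `V = ran Q` and `P = P_V`. A unit vector `x = βu + Qy` in the range of `uuᵀ + Q` has
`x - Px = β (u - Pu)`, and `Q` only sees `v = Px`, so
`xᵀ(uuᵀ + Q)x = ⟪u, x⟫² + vᵀQv ≥ ⟪u, x⟫² + λ_min(Q) ‖v‖²` with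
`|⟪u, x⟫| ≥ ‖u - Pu‖ ‖x - Px‖ - ‖Pu‖ ‖v‖`. What remains is a quadratic inequality in
`(s, t) = (‖x - Px‖, ‖v‖)` on the unit circle: with `p = ‖Pu‖`, `q = ‖u - Pu‖`, `U = ‖u‖`,
the form `(q s - p t)² + U² t²` has smallest eigenvalue `U (U - p) = ‖u‖² (1 - cos θ)`,
and when `q s < p t` the term `U² t²` alone already exceeds it.
-/

open scoped Matrix

/-- The smallest positive eigenvalue of a (nonzero, symmetric positive
semidefinite) matrix `M`, characterized as the infimum of the Rayleigh
quotient `xᵀ M x` over unit vectors `x` in the range of `M`. -/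
noncomputable def lamMinPos {n : ℕ} (M : Matrix (Fin n) (Fin n) ℝ) : ℝ :=
  sInf {t : ℝ | ∃ x : EuclideanSpace ℝ (Fin n), ‖x‖ = 1 ∧
    (∃ y : Fin n → ℝ, (x : Fin n → ℝ) = M.mulVec y) ∧
    t = (x : Fin n → ℝ) ⬝ᵥ M.mulVec x}

open scoped RealInnerProductSpace
open InnerProductSpace

lemma mul_sub_le_sq_add_sq_mul_sq {U p q s t r : ℝ} (hU : 0 < U) (hp : 0 ≤ p) (hq : 0 ≤ q)
    (hs : 0 ≤ s) (hpq : p ^ 2 + q ^ 2 = U ^ 2) (hst : s ^ 2 + t ^ 2 = 1)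
    (hr : q * s - p * t ≤ |r|) :
    U * (U - p) ≤ r ^ 2 + U ^ 2 * t ^ 2 := by
  have hpU : p ≤ U := by nlinarith
  rcases le_or_gt (q * s) (p * t) with h | h
  · have hsq : (q * s) ^ 2 ≤ (p * t) ^ 2 := pow_le_pow_left₀ (by positivity) h 2
    nlinarith [sq_nonneg r]
  · have hsq : (q * s - p * t) ^ 2 ≤ r ^ 2 := by
      simpa only [sq_abs] using pow_le_pow_left₀ (by linarith) hr 2
    have hsquare : (U + p) * ((q * s - p * t) ^ 2 + U ^ 2 * t ^ 2 - U * (U - p))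
        = p * (q * s - (U + p) * t) ^ 2 := by
      linear_combination U * s ^ 2 * hpq + (U + p) * U * (U - p) * hst
    have hprod : 0 ≤ (U + p) * (r ^ 2 + U ^ 2 * t ^ 2 - U * (U - p)) := by
      nlinarith [hsquare, mul_nonneg hp (sq_nonneg (q * s - (U + p) * t))]
    nlinarith [(mul_nonneg_iff_of_pos_left (by linarith : 0 < U + p)).mp hprod]

lemma one_sub_div_mul_min_le {U p q s t r l : ℝ} (hU : 0 < U) (hp : 0 ≤ p) (hq : 0 ≤ q)
    (hs : 0 ≤ s) (hpq : p ^ 2 + q ^ 2 = U ^ 2) (hst : s ^ 2 + t ^ 2 = 1)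
    (hr : q * s - p * t ≤ |r|) (hl : 0 ≤ l) :
    (1 - p / U) * min (U ^ 2) l ≤ r ^ 2 + l * t ^ 2 := by
  set m := min (U ^ 2) l
  have hm : 0 ≤ m := le_min (sq_nonneg U) hl
  rw [← mul_le_mul_iff_of_pos_right (pow_pos hU 2)]
  calc (1 - p / U) * m * U ^ 2 = m * (U * (U - p)) := by field_simp
    _ ≤ m * (r ^ 2 + U ^ 2 * t ^ 2) :=
      mul_le_mul_of_nonneg_left (mul_sub_le_sq_add_sq_mul_sq hU hp hq hs hpq hst hr) hm
    _ ≤ (r ^ 2 + l * t ^ 2) * U ^ 2 := by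
      nlinarith [mul_le_mul_of_nonneg_right (min_le_left (U ^ 2) l) (sq_nonneg r),
        mul_le_mul_of_nonneg_right (min_le_right (U ^ 2) l) (sq_nonneg (U * t))]

lemma Submodule.sub_starProjection_smul_add {E : Type*} [NormedAddCommGroup E]
    [InnerProductSpace ℝ E] (K : Submodule ℝ E) [K.HasOrthogonalProjection] (a : ℝ) (u : E)
    {z : E} (hz : z ∈ K) :
    a • u + z - K.starProjection (a • u + z) = a • (u - K.starProjection u) := by
  rw [map_add, map_smul, starProjection_eq_self_iff.mpr hz, smul_sub]
  abel

namespace LinearMap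

variable {E : Type*} [NormedAddCommGroup E] [InnerProductSpace ℝ E] {T : E →ₗ[ℝ] E}

noncomputable def rayleighInfOnRange (T : E →ₗ[ℝ] E) : ℝ :=
  sInf {c | ∃ x, ‖x‖ = 1 ∧ x ∈ range T ∧ c = ⟪x, T x⟫}

lemma IsPositive.rayleighInfOnRange_nonneg (hT : T.IsPositive) : 0 ≤ T.rayleighInfOnRange :=
  Real.sInf_nonneg <| by
    rintro c ⟨x, -, -, rfl⟩
    exact hT.inner_nonneg_right x

lemma IsPositive.rayleighInfOnRange_mul_norm_sq_le (hT : T.IsPositive) {x : E}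
    (hx : x ∈ range T) : T.rayleighInfOnRange * ‖x‖ ^ 2 ≤ ⟪x, T x⟫ := by
  rcases eq_or_ne x 0 with rfl | hx0
  · simp
  have hnorm : 0 < ‖x‖ := norm_pos_iff.mpr hx0
  have hle : T.rayleighInfOnRange ≤ ⟪‖x‖⁻¹ • x, T (‖x‖⁻¹ • x)⟫ := by
    refine csInf_le ⟨0, ?_⟩ ⟨‖x‖⁻¹ • x, ?_, Submodule.smul_mem _ _ hx, rfl⟩
    · rintro c ⟨y, -, -, rfl⟩
      exact hT.inner_nonneg_right y
    · rw [norm_smul, norm_inv, norm_norm, inv_mul_cancel₀ hnorm.ne']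
  rw [map_smul, real_inner_smul_left, real_inner_smul_right] at hle
  calc T.rayleighInfOnRange * ‖x‖ ^ 2 ≤ ‖x‖⁻¹ * (‖x‖⁻¹ * ⟪x, T x⟫) * ‖x‖ ^ 2 := by gcongr
    _ = ⟪x, T x⟫ := by field_simp

lemma le_rayleighInfOnRange {c : ℝ} (hT : T ≠ 0)
    (h : ∀ x, ‖x‖ = 1 → x ∈ range T → c ≤ ⟪x, T x⟫) : c ≤ T.rayleighInfOnRange := by
  obtain ⟨y, hy⟩ : ∃ y, T y ≠ 0 := by
    by_contra! h0
    exact hT (LinearMap.ext h0)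
  have hnorm : ‖T y‖⁻¹ * ‖T y‖ = 1 := inv_mul_cancel₀ (norm_ne_zero_iff.mpr hy)
  refine le_csInf ⟨_, ‖T y‖⁻¹ • T y, ?_, Submodule.smul_mem _ _ (mem_range_self T y), rfl⟩ ?_
  · rw [norm_smul, norm_inv, norm_norm, hnorm]
  · rintro _ ⟨x, hx1, hx, rfl⟩
    exact h x hx1 hx

lemma IsSymmetric.inner_starProjection_map_starProjection (hT : T.IsSymmetric)
    [(range T).HasOrthogonalProjection] (x : E) :
    ⟪(range T).starProjection x, T ((range T).starProjection x)⟫ = ⟪x, T x⟫ := by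
  have hker : T (x - (range T).starProjection x) = 0 := by
    rw [← mem_ker, ← hT.orthogonal_range]
    exact Submodule.sub_starProjection_mem_orthogonal x
  rw [map_sub, sub_eq_zero] at hker
  rw [← hker, eq_comm, ← sub_eq_zero, ← inner_sub_left, real_inner_comm]
  exact Submodule.inner_right_of_mem_orthogonal (mem_range_self T x)
    (Submodule.sub_starProjection_mem_orthogonal x)

lemma inner_rankOne_add_apply_self (u x : E) :
    ⟪x, (((rankOne ℝ u u : E →L[ℝ] E) : E →ₗ[ℝ] E) + T) x⟫ = ⟪u, x⟫ ^ 2 + ⟪x, T x⟫ := by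
  simp only [add_apply, ContinuousLinearMap.coe_coe, rankOne_apply, inner_add_right,
    real_inner_smul_right, real_inner_comm x u, sq]

lemma IsPositive.one_sub_div_mul_min_le_inner_rankOne_add_apply_self (hT : T.IsPositive)
    [(range T).HasOrthogonalProjection] {u x : E} (hu : u ≠ 0) (hx1 : ‖x‖ = 1)
    (hx : x ∈ range (((rankOne ℝ u u : E →L[ℝ] E) : E →ₗ[ℝ] E) + T)) :
    (1 - ‖(range T).starProjection u‖ / ‖u‖) * min (‖u‖ ^ 2) T.rayleighInfOnRange
      ≤ ⟪x, (((rankOne ℝ u u : E →L[ℝ] E) : E →ₗ[ℝ] E) + T) x⟫ := by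
  set K := range T
  set v := K.starProjection x
  set w := x - K.starProjection x
  set uK := K.starProjection u
  obtain ⟨y, hy⟩ := hx
  have hw : w = ⟪u, y⟫ • (u - uK) := by
    have hxy : x = ⟪u, y⟫ • u + T y := by simp [← hy]
    simp only [w, hxy]
    exact K.sub_starProjection_smul_add _ u (mem_range_self T y)
  have hvw : ‖w‖ ^ 2 + ‖v‖ ^ 2 = 1 := by
    have := K.norm_sq_eq_add_norm_sq_starProjection x
    rw [K.starProjection_orthogonal_val, hx1] at this
    linarith
  have hu2 : ‖uK‖ ^ 2 + ‖u - uK‖ ^ 2 = ‖u‖ ^ 2 := by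
    rw [K.norm_sq_eq_add_norm_sq_starProjection u, K.starProjection_orthogonal_val]
  have hux : ‖u - uK‖ * ‖w‖ - ‖uK‖ * ‖v‖ ≤ |⟪u, x⟫| := by
    have hsplit : ⟪u, x⟫ = ⟪u - uK, w⟫ + ⟪uK, v⟫ := by
      have h1 : ⟪uK, w⟫ = 0 := K.inner_right_of_mem_orthogonal (K.starProjection_apply_mem u)
        (K.sub_starProjection_mem_orthogonal x)
      have h2 : ⟪u - uK, v⟫ = 0 := K.inner_left_of_mem_orthogonal (K.starProjection_apply_mem x)
        (K.sub_starProjection_mem_orthogonal u)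
      calc ⟪u, x⟫ = ⟪uK + (u - uK), v + w⟫ := by simp [v, w]
        _ = ⟪u - uK, w⟫ + ⟪uK, v⟫ := by
          simp only [inner_add_left, inner_add_right, h1, h2]; ring
    have hA : |⟪u - uK, w⟫| = ‖u - uK‖ * ‖w‖ := by
      rw [hw, real_inner_smul_right, real_inner_self_eq_norm_sq, norm_smul, Real.norm_eq_abs,
        abs_mul, abs_sq]
      ring
    rw [hsplit]
    linarith [abs_sub_abs_le_abs_add ⟪u - uK, w⟫ ⟪uK, v⟫, abs_real_inner_le_norm uK v]
  have hTx : T.rayleighInfOnRange * ‖v‖ ^ 2 ≤ ⟪x, T x⟫ :=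
    hT.isSymmetric.inner_starProjection_map_starProjection x ▸
      hT.rayleighInfOnRange_mul_norm_sq_le (K.starProjection_apply_mem x)
  calc _ ≤ ⟪u, x⟫ ^ 2 + T.rayleighInfOnRange * ‖v‖ ^ 2 :=
        one_sub_div_mul_min_le (norm_pos_iff.mpr hu) (norm_nonneg _) (norm_nonneg _)
          (norm_nonneg _) hu2 hvw hux hT.rayleighInfOnRange_nonneg
    _ ≤ _ := by rw [inner_rankOne_add_apply_self]; linarith

theorem IsPositive.one_sub_div_mul_min_le_rayleighInfOnRange_rankOne_add (hT : T.IsPositive)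
    [(range T).HasOrthogonalProjection] (u : E) :
    (1 - ‖(range T).starProjection u‖ / ‖u‖) * min (‖u‖ ^ 2) T.rayleighInfOnRange
      ≤ ((((rankOne ℝ u u : E →L[ℝ] E) : E →ₗ[ℝ] E) + T)).rayleighInfOnRange := by
  rcases eq_or_ne u 0 with rfl | hu
  · simp
  refine le_rayleighInfOnRange (fun h => ?_) fun x hx1 hx =>
    hT.one_sub_div_mul_min_le_inner_rankOne_add_apply_self hu hx1 hx
  have hpos : 0 < ⟪u, (((rankOne ℝ u u : E →L[ℝ] E) : E →ₗ[ℝ] E) + T) u⟫ := by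
    rw [inner_rankOne_add_apply_self, real_inner_self_eq_norm_sq]
    have := hT.inner_nonneg_right u
    positivity
  simp [h] at hpos

end LinearMap

namespace Matrix

lemma toEuclideanLin_of_mul_eq_rankOne {ι : Type*} [Fintype ι] [DecidableEq ι]
    (u : EuclideanSpace ℝ ι) :
    toEuclideanLin (of fun i j => u i * u j) = (rankOne ℝ u u : _ →L[ℝ] _) := by
  rw [← LinearEquiv.eq_symm_apply, symm_toEuclideanLin_rankOne]
  ext i j
  simp [vecMulVec_apply]

end Matrix

lemma lamMinPos_eq_rayleighInfOnRange {n : ℕ} (M : Matrix (Fin n) (Fin n) ℝ) :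
    lamMinPos M = (Matrix.toEuclideanLin M).rayleighInfOnRange := by
  unfold lamMinPos LinearMap.rayleighInfOnRange
  congr 1
  ext c
  refine exists_congr fun x => and_congr_right fun _ => and_congr ?_ ?_
  · constructor
    · rintro ⟨y, hy⟩
      exact ⟨WithLp.toLp 2 y, by simp [Matrix.toLpLin_apply, ← hy]⟩
    · rintro ⟨y, rfl⟩
      exact ⟨_, rfl⟩
  · simp [EuclideanSpace.inner_eq_star_dotProduct, Matrix.toLpLin_apply, dotProduct_comm]

theorem lamMinPos_rank_one_update_general (n : ℕ) (u : EuclideanSpace ℝ (Fin n))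
    (Q : Matrix (Fin n) (Fin n) ℝ) (hQ : Q.PosSemidef) :
    lamMinPos (Matrix.of (fun i j => u i * u j) + Q)
      ≥ (1 - ‖(Submodule.orthogonalProjection (LinearMap.range (Matrix.toEuclideanLin Q)) u :
            EuclideanSpace ℝ (Fin n))‖ / ‖u‖)
        * min (‖u‖ ^ 2) (lamMinPos Q) := by
  rw [ge_iff_le, lamMinPos_eq_rayleighInfOnRange, lamMinPos_eq_rayleighInfOnRange, map_add,
    Matrix.toEuclideanLin_of_mul_eq_rankOne]
  exact (Matrix.isPositive_toEuclideanLin_iff.mpr hQ)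
    |>.one_sub_div_mul_min_le_rayleighInfOnRange_rankOne_add u

/-- rank-one update bound: for `P = uuᵀ` and `Q ≠ 0`
symmetric positive semidefinite,
`λ_min(P+Q) ≥ (1 - cos θ(u, ran Q)) · min{‖u‖², λ_min(Q)}`,
where `cos θ(u, ran Q) = ‖P_{ran Q} u‖/‖u‖` and `λ_min` is the smallest
positive eigenvalue. -/
theorem lamMinPos_rank_one_update (n : ℕ) (u : EuclideanSpace ℝ (Fin n))
    (Q : Matrix (Fin n) (Fin n) ℝ) (hQ : Q.PosSemidef) (hQ0 : Q ≠ 0) :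
    lamMinPos (Matrix.of (fun i j => u i * u j) + Q)
      ≥ (1 - ‖(Submodule.orthogonalProjection (LinearMap.range (Matrix.toEuclideanLin Q)) u :
            EuclideanSpace ℝ (Fin n))‖ / ‖u‖)
        * min (‖u‖ ^ 2) (lamMinPos Q) :=
  lamMinPos_rank_one_update_general n u Q hQ
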